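/- Let b > 0, λ ∈ (1,∞), and let f_μ(t) := (1/(2b)) exp(−|t−μ|/b) be the Laplace density with location μ and scale b. Then D_λ(f_1, f_0) = (1/(λ−1)) · log{ (λ/(2λ−1)) · exp((λ−1)/b) + ((λ−1)/(2λ−1)) · exp(−λ/b) }, i.e. ∫_ℝ f_1(t)^λ f_0(t)^{1−λ} dt = (λ/(2λ−1)) e^{(λ−1)/b} + ((λ−1)/(2λ−1)) e^{−λ/b}. -/

import Mathlib

open MeasureTheory

/-- The Laplace density with location `μ` and scale `b`. -/
noncomputable def laplacePdf (b μ t : ℝ) : ℝ := (1 / (2 * b)) * Real.exp (-|t - μ| / b)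

/-!
The integrand `f₁(t)^λ f₀(t)^(1-λ)` equals `(2b)⁻¹ exp(-(λ/b)|t-1| + ((λ-1)/b)|t|)`. Its exponent
is affine on each of `(-∞, 0]`, `(0, 1]` and `(1, ∞)`, with slopes `1/b`, `(2λ-1)/b` and `-1/b`, so
the integral is a sum of three elementary exponential integrals; the two outer ones converge
because `λ/b > (λ-1)/b`.
-/

open Real Set

section ExpAffine

variable {k : ℝ} (m : ℝ)

lemma integrableOn_exp_mul_add_Iic (hk : 0 < k) (x : ℝ) :
    IntegrableOn (fun t => exp (k * t + m)) (Iic x) := by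
  simp only [exp_add]
  exact (integrableOn_exp_mul_Iic hk x).mul_const (exp m)

lemma integrableOn_exp_mul_add_Ioi (hk : k < 0) (x : ℝ) :
    IntegrableOn (fun t => exp (k * t + m)) (Ioi x) := by
  simp only [exp_add]
  exact (integrableOn_exp_mul_Ioi hk x).mul_const (exp m)

lemma integral_exp_mul_add_Iic (hk : 0 < k) (x : ℝ) :
    ∫ t in Iic x, exp (k * t + m) = exp (k * x + m) / k := by
  simp only [exp_add, integral_mul_const, integral_exp_mul_Iic hk, div_mul_eq_mul_div]

lemma integral_exp_mul_add_Ioi (hk : k < 0) (x : ℝ) :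
    ∫ t in Ioi x, exp (k * t + m) = -exp (k * x + m) / k := by
  simp only [exp_add, integral_mul_const, integral_exp_mul_Ioi hk, div_mul_eq_mul_div, neg_mul]

lemma integral_exp_mul_add (hk : k ≠ 0) (x y : ℝ) :
    ∫ t in x..y, exp (k * t + m) = (exp (k * y + m) - exp (k * x + m)) / k := by
  rw [intervalIntegral.integral_comp_mul_add (fun t => exp t) hk, integral_exp, smul_eq_mul,
    inv_mul_eq_div]

end ExpAffine

lemma integral_exp_neg_mul_abs_sub_add_mul_abs {a c d : ℝ} (hca : c < a) (hac : a + c ≠ 0)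
    (hd : 0 ≤ d) :
    ∫ t, exp (-a * |t - d| + c * |t|)
      = (exp (-(a * d)) + exp (c * d)) / (a - c) + (exp (c * d) - exp (-(a * d))) / (a + c) := by
  set g := fun t => exp (-a * |t - d| + c * |t|)
  have eq_Iic : EqOn g (fun t => exp ((a - c) * t + -(a * d))) (Iic 0) := by
    intro t (ht : t ≤ 0)
    simp only [g, abs_of_nonpos ht, abs_of_nonpos (by linarith : t - d ≤ 0)]
    ring_nf
  have eq_Ioc : EqOn g (fun t => exp ((a + c) * t + -(a * d))) (Ioc 0 d) := by
    intro t ⟨ht₀, htd⟩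
    simp only [g, abs_of_pos ht₀, abs_of_nonpos (sub_nonpos.2 htd)]
    ring_nf
  have eq_Ioi : EqOn g (fun t => exp ((c - a) * t + a * d)) (Ioi d) := by
    intro t (ht : d < t)
    simp only [g, abs_of_pos (by linarith : 0 < t), abs_of_pos (sub_pos.2 ht)]
    ring_nf
  have hleft : IntegrableOn g (Iic 0) :=
    (integrableOn_exp_mul_add_Iic _ (sub_pos.2 hca) 0).congr_fun eq_Iic.symm measurableSet_Iic
  have hmiddle : IntegrableOn g (Ioc 0 d) := (by fun_prop : Continuous g).integrableOn_Ioc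
  have hright : IntegrableOn g (Ioi d) :=
    (integrableOn_exp_mul_add_Ioi _ (sub_neg.2 hca) d).congr_fun eq_Ioi.symm measurableSet_Ioi
  rw [← intervalIntegral.integral_Iic_add_Ioi hleft
      (Ioc_union_Ioi_eq_Ioi hd ▸ hmiddle.union hright),
    ← Ioc_union_Ioi_eq_Ioi hd,
    setIntegral_union Ioc_disjoint_Ioi_same measurableSet_Ioi hmiddle hright,
    setIntegral_congr_fun measurableSet_Iic eq_Iic, setIntegral_congr_fun measurableSet_Ioc eq_Ioc,
    setIntegral_congr_fun measurableSet_Ioi eq_Ioi, ← intervalIntegral.integral_of_le hd,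
    integral_exp_mul_add_Iic _ (sub_pos.2 hca), integral_exp_mul_add _ hac,
    integral_exp_mul_add_Ioi _ (sub_neg.2 hca)]
  have hac' : a - c ≠ 0 := (sub_pos.2 hca).ne'
  have hca' : c - a ≠ 0 := (sub_neg.2 hca).ne
  rw [show (a - c) * 0 + -(a * d) = -(a * d) by ring,
    show (a + c) * 0 + -(a * d) = -(a * d) by ring,
    show (a + c) * d + -(a * d) = c * d by ring, show (c - a) * d + a * d = c * d by ring]
  field_simp
  ring

lemma laplacePdf_rpow_mul_rpow {b : ℝ} (hb : 0 < b) (l μ ν t : ℝ) :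
    laplacePdf b μ t ^ l * laplacePdf b ν t ^ (1 - l)
      = (2 * b)⁻¹ * exp (-(l / b) * |t - μ| + (l - 1) / b * |t - ν|) := by
  have h2b : 0 < 1 / (2 * b) := by positivity
  rw [laplacePdf, laplacePdf, mul_rpow h2b.le (exp_pos _).le, mul_rpow h2b.le (exp_pos _).le,
    ← exp_mul, ← exp_mul, mul_mul_mul_comm, ← rpow_add h2b, add_sub_cancel, rpow_one, ← exp_add,
    one_div]
  congr 2
  field_simp
  ring

/-- Exact Rényi divergence of order `λ ∈ (1,∞)` between Laplace densities `f_1` and `f_0`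
with common scale `b`:
`∫ f_1^λ f_0^{1-λ} = (λ/(2λ-1)) e^{(λ-1)/b} + ((λ-1)/(2λ-1)) e^{-λ/b}`, hence
`D_λ(f_1,f_0) = (1/(λ-1)) log { (λ/(2λ-1)) e^{(λ-1)/b} + ((λ-1)/(2λ-1)) e^{-λ/b} }`. -/
theorem renyiDiv_laplace (b l : ℝ) (hb : 0 < b) (hl : 1 < l) :
    (∫ t : ℝ, laplacePdf b 1 t ^ l * laplacePdf b 0 t ^ (1 - l))
      = (l / (2 * l - 1)) * Real.exp ((l - 1) / b)
        + ((l - 1) / (2 * l - 1)) * Real.exp (-l / b) ∧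
    (1 / (l - 1)) * Real.log (∫ t : ℝ, laplacePdf b 1 t ^ l * laplacePdf b 0 t ^ (1 - l))
      = (1 / (l - 1)) * Real.log ((l / (2 * l - 1)) * Real.exp ((l - 1) / b)
        + ((l - 1) / (2 * l - 1)) * Real.exp (-l / b)) := by
  have h2l : 2 * l - 1 ≠ 0 := by linarith
  have hsum : l / b + (l - 1) / b = (2 * l - 1) / b := by ring
  have hdiff : l / b - (l - 1) / b = b⁻¹ := by ring
  have hintegral : ∫ t : ℝ, laplacePdf b 1 t ^ l * laplacePdf b 0 t ^ (1 - l)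
      = (l / (2 * l - 1)) * Real.exp ((l - 1) / b)
        + ((l - 1) / (2 * l - 1)) * Real.exp (-l / b) := by
    simp_rw [laplacePdf_rpow_mul_rpow hb, sub_zero]
    rw [integral_const_mul, integral_exp_neg_mul_abs_sub_add_mul_abs
      (div_lt_div_of_pos_right (by linarith) hb) (hsum ▸ div_ne_zero h2l hb.ne')
      zero_le_one, hsum, hdiff]
    simp only [mul_one, neg_div]
    field_simp
    ring
  exact ⟨hintegral, by rw [hintegral]⟩
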